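/- Let Ω ⊆ ℝ^N be a bounded open set. For each n let (y_n, D_n, f_n) be an admissible deformation triple on Ω, and let (y, D, f) be an admissible deformation triple on Ω. Assume that y_n → y almost everywhere in Ω and that x ↦ det(f_n x) converges weakly in L¹(Ω) to x ↦ det(f x). Then for every measurable set E ⊆ Ω the extended inverse maps converge in L¹(ℝ^N; ℝ^N): ∫⁻_{ℝ^N} ‖F_n(ξ) − F(ξ)‖ dξ → 0 as n → ∞ (lower Lebesgue integral of the extended-real-valued norm), where F_n(ξ) := Function.invFunOn y_n D_n (ξ) if ξ ∈ y_n(E ∩ D_n) and F_n(ξ) := 0 otherwise, and F(ξ) := Function.invFunOn y D (ξ) if ξ ∈ y(E ∩ D) and F(ξ) := 0 otherwise. (This is the statement χ_{im_G(y_n,E)} y_n⁻¹ → χ_{im_G(y,E)} y⁻¹ in L¹(ℝ^N; ℝ^N).) -/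

import Mathlib

open MeasureTheory Filter Topology Set
open scoped ENNReal NNReal

noncomputable section

abbrev Euc (N : ℕ) := EuclideanSpace ℝ (Fin N)

/-- An a.e. approximately differentiable map on `A`, encoded as a triple `(u, D, f)`. -/
def ApproxDiffTriple {N : ℕ} (A D : Set (Euc N)) (u : Euc N → Euc N)
    (f : Euc N → Euc N →L[ℝ] Euc N) : Prop :=
  MeasurableSet D ∧ D ⊆ A ∧ volume (A \ D) = 0 ∧ ∀ x ∈ D, HasFDerivWithinAt u (f x) D x

/-- An admissible deformation on `Ω` (the class `𝒴(Ω)` of the paper). -/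
def AdmissibleDef {N : ℕ} (Ω D : Set (Euc N)) (y : Euc N → Euc N)
    (f : Euc N → Euc N →L[ℝ] Euc N) : Prop :=
  ApproxDiffTriple Ω D y f ∧ Set.InjOn y D ∧ (∀ x ∈ D, 0 < (f x).det) ∧
    IntegrableOn (fun x => (f x).det) Ω volume

/-- Weak convergence in `L¹(Ω)`, tested against bounded measurable functions. -/
def WeakL1ConvOn {N : ℕ} (Ω : Set (Euc N)) (u : ℕ → Euc N → ℝ) (v : Euc N → ℝ) : Prop :=
  ∀ g : Euc N → ℝ, Measurable g → (∃ C : ℝ, ∀ x, |g x| ≤ C) →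
    Tendsto (fun n => ∫ x in Ω, u n x * g x) atTop (𝓝 (∫ x in Ω, v x * g x))

open scoped BoundedContinuousFunction

/-!
By the change of variables formula, `∫_{y(E ∩ D)} Φ(ξ, y⁻¹ ξ) dξ = ∫_E det ∇y(x) Φ(y x, x) dx`.
For continuous `Φ` bounded on `ℝ^N × Ω` the right-hand sides converge along the sequence:
`yₙ → y` a.e., and pairing a weakly convergent sequence of nonnegative `L¹` functions with
uniformly bounded a.e. convergent ones passes to the limit (by Egorov's theorem). Testing with
`Φ(ξ, z) = φ ξ` and `Φ(ξ, z) = ‖z - g ξ‖` for bounded continuous `φ`, `g`, and approximating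
`χ_{y(E ∩ D)} y⁻¹` in `L¹` by such `g`, gives the `L¹` convergence of the inverses.
-/

section WeakL1

variable {α : Type*} [MeasurableSpace α] {μ : Measure α}

/-- `WeakL1ConvOn Ω` is `TendstoWeaklyL1 (volume.restrict Ω)` unfolded. -/
def TendstoWeaklyL1 (μ : Measure α) (w : ℕ → α → ℝ) (w₀ : α → ℝ) : Prop :=
  ∀ g : α → ℝ, Measurable g → (∃ C : ℝ, ∀ x, |g x| ≤ C) →
    Tendsto (fun n => ∫ x, w n x * g x ∂μ) atTop (𝓝 (∫ x, w₀ x * g x ∂μ))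

theorem integral_mul_le_of_le_on_compl {w k : α → ℝ} (hw : Integrable w μ)
    (hw_nonneg : 0 ≤ᵐ[μ] w) (hk_nonneg : ∀ x, 0 ≤ k x) {A : Set α} (hA : MeasurableSet A)
    {η C : ℝ} (hη : 0 ≤ η) (hkC : ∀ᵐ x ∂μ, k x ≤ C) (hkη : ∀ᵐ x ∂μ, x ∉ A → k x ≤ η) :
    ∫ x, w x * k x ∂μ ≤ η * ∫ x, w x ∂μ + C * ∫ x in A, w x ∂μ := by
  have hint : Integrable (A.indicator fun x => C * w x) μ := (hw.const_mul C).indicator hA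
  calc ∫ x, w x * k x ∂μ ≤ ∫ x, (η * w x + A.indicator (fun x => C * w x) x) ∂μ := by
        refine integral_mono_of_nonneg ?_ ((hw.const_mul η).add hint) ?_
        · filter_upwards [hw_nonneg] with x hx using mul_nonneg hx (hk_nonneg x)
        filter_upwards [hw_nonneg, hkC, hkη] with x hx hxC hxη
        have hx : 0 ≤ w x := hx
        by_cases hxA : x ∈ A
        · rw [indicator_of_mem hxA]
          nlinarith [mul_le_mul_of_nonneg_left hxC hx, mul_nonneg hη hx]
        · rw [indicator_of_notMem hxA, add_zero, mul_comm η]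
          exact mul_le_mul_of_nonneg_left (hxη hxA) hx
    _ = η * ∫ x, w x ∂μ + C * ∫ x in A, w x ∂μ := by
        rw [integral_add (hw.const_mul η) hint, integral_indicator hA, integral_const_mul,
          integral_const_mul]

namespace TendstoWeaklyL1

variable {w : ℕ → α → ℝ} {w₀ : α → ℝ}

theorem tendsto_integral_mul_of_ae_bound (hw : TendstoWeaklyL1 μ w w₀) {g : α → ℝ}
    (hg : AEStronglyMeasurable g μ) {C : ℝ} (hgC : ∀ᵐ x ∂μ, |g x| ≤ C) :
    Tendsto (fun n => ∫ x, w n x * g x ∂μ) atTop (𝓝 (∫ x, w₀ x * g x ∂μ)) := by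
  -- clamping a measurable version of `g` to `[-C, C]` gives an admissible test function
  set g' : α → ℝ := fun x => max (-C) (min (hg.mk g x) C)
  have hg' : g =ᵐ[μ] g' := by
    filter_upwards [hg.ae_eq_mk, hgC] with x hx hxC
    rw [abs_le] at hxC
    simp only [g', ← hx, min_eq_left hxC.2, max_eq_right hxC.1]
  have hint : ∀ v : α → ℝ, ∫ x, v x * g x ∂μ = ∫ x, v x * g' x ∂μ := fun v =>
    integral_congr_ae (hg'.mono fun x hx => by simp only [hx])
  simp only [hint]
  refine hw g' (measurable_const.max (hg.stronglyMeasurable_mk.measurable.min measurable_const))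
    ⟨|C|, fun x => abs_le.2 ⟨?_, ?_⟩⟩
  · exact (neg_le_neg (le_abs_self C)).trans (le_max_left _ _)
  · exact max_le (neg_le_abs C) ((min_le_right _ _).trans (le_abs_self C))

theorem tendsto_setIntegral (hw : TendstoWeaklyL1 μ w w₀) {A : Set α} (hA : MeasurableSet A) :
    Tendsto (fun n => ∫ x in A, w n x ∂μ) atTop (𝓝 (∫ x in A, w₀ x ∂μ)) := by
  have hmul : ∀ v : α → ℝ, ∫ x, v x * A.indicator 1 x ∂μ = ∫ x in A, v x ∂μ := fun v => by
    rw [← integral_indicator hA]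
    congr 1 with x
    by_cases hx : x ∈ A <;> simp [hx]
  simpa only [hmul] using hw _ (measurable_one.indicator hA)
    ⟨1, fun x => by by_cases hx : x ∈ A <;> simp [hx]⟩

theorem tendsto_integral_mul_of_tendsto_zero [IsFiniteMeasure μ] (hw : TendstoWeaklyL1 μ w w₀)
    (hw_int : ∀ n, Integrable (w n) μ) (hw₀ : Integrable w₀ μ) (hw_nonneg : ∀ n, 0 ≤ᵐ[μ] w n)
    {k : ℕ → α → ℝ} {C : ℝ} (hk : ∀ n, AEStronglyMeasurable (k n) μ)
    (hk_nonneg : ∀ n x, 0 ≤ k n x) (hk_le : ∀ n, ∀ᵐ x ∂μ, k n x ≤ C)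
    (hk_lim : ∀ᵐ x ∂μ, Tendsto (fun n => k n x) atTop (𝓝 0)) :
    Tendsto (fun n => ∫ x, w n x * k n x ∂μ) atTop (𝓝 0) := by
  set k' : ℕ → α → ℝ := fun n => (hk n).mk (k n)
  have hkk' : ∀ᵐ x ∂μ, ∀ n, k n x = k' n x := ae_all_iff.2 fun n => (hk n).ae_eq_mk
  have egorov : ∀ j : ℕ, ∃ A, MeasurableSet A ∧ μ A ≤ ENNReal.ofReal (1 / (j + 1)) ∧
      TendstoUniformlyOn k' 0 atTop Aᶜ := fun j =>
    tendstoUniformlyOn_of_ae_tendsto' (fun n => (hk n).stronglyMeasurable_mk)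
      stronglyMeasurable_const
      (by filter_upwards [hk_lim, hkk'] with x hx hx' using hx.congr hx') Nat.one_div_pos_of_nat
  choose A hAm hAμ hA using egorov
  -- `k n ≤ 1 / (j + 1)` eventually off `A j`, so `bound j (w n)` eventually dominates, and its
  -- limit `bound j w₀` is small for large `j` by absolute continuity of the integral
  set bound : ℕ → (α → ℝ) → ℝ := fun j v => 1 / (j + 1) * ∫ x, v x ∂μ + C * ∫ x in A j, v x ∂μ
  have hle : ∀ j, ∀ᶠ n in atTop, ∫ x, w n x * k n x ∂μ ≤ bound j (w n) := fun j => by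
    filter_upwards [Metric.tendstoUniformlyOn_iff.1 (hA j) _ Nat.one_div_pos_of_nat] with n hn
    refine integral_mul_le_of_le_on_compl (hw_int n) (hw_nonneg n) (hk_nonneg n) (hAm j)
      Nat.one_div_pos_of_nat.le (hk_le n) ?_
    filter_upwards [hkk'] with x hx hxA
    have := hn x hxA
    rw [Pi.zero_apply, dist_zero_left, Real.norm_eq_abs, ← hx n] at this
    exact (le_abs_self _).trans this.le
  have htotal : Tendsto (fun n => ∫ x, w n x ∂μ) atTop (𝓝 (∫ x, w₀ x ∂μ)) := by
    simpa using hw.tendsto_setIntegral MeasurableSet.univ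
  have hlim_n : ∀ j, Tendsto (fun n => bound j (w n)) atTop (𝓝 (bound j w₀)) := fun j =>
    (htotal.const_mul _).add ((hw.tendsto_setIntegral (hAm j)).const_mul C)
  have hlim_j : Tendsto (fun j => bound j w₀) atTop (𝓝 0) := by
    have hA_lim : Tendsto (fun j => μ (A j)) atTop (𝓝 0) := by
      refine tendsto_of_tendsto_of_tendsto_of_le_of_le tendsto_const_nhds ?_ (fun _ => bot_le) hAμ
      simpa using ENNReal.tendsto_ofReal (tendsto_one_div_add_atTop_nhds_zero_nat (𝕜 := ℝ))
    simp only [bound]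
    simpa using ((tendsto_one_div_add_atTop_nhds_zero_nat (𝕜 := ℝ)).mul_const _).add
      ((hw₀.tendsto_setIntegral_nhds_zero hA_lim).const_mul C)
  refine tendsto_order.2 ⟨fun a ha => Eventually.of_forall fun n => ha.trans_le
    (integral_nonneg_of_ae ?_), fun ε hε => ?_⟩
  · filter_upwards [hw_nonneg n] with x hx using mul_nonneg hx (hk_nonneg n x)
  obtain ⟨j, hj⟩ := (hlim_j.eventually (gt_mem_nhds hε)).exists
  filter_upwards [hle j, (hlim_n j).eventually (gt_mem_nhds hj)] with n h1 h2
  exact h1.trans_lt h2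

theorem tendsto_integral_mul_of_ae_tendsto [IsFiniteMeasure μ] (hw : TendstoWeaklyL1 μ w w₀)
    (hw_int : ∀ n, Integrable (w n) μ) (hw₀ : Integrable w₀ μ) (hw_nonneg : ∀ n, 0 ≤ᵐ[μ] w n)
    {h : ℕ → α → ℝ} {h₀ : α → ℝ} {C : ℝ} (hh : ∀ n, AEStronglyMeasurable (h n) μ)
    (hh_bound : ∀ n, ∀ᵐ x ∂μ, |h n x| ≤ C)
    (hh_lim : ∀ᵐ x ∂μ, Tendsto (fun n => h n x) atTop (𝓝 (h₀ x))) :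
    Tendsto (fun n => ∫ x, w n x * h n x ∂μ) atTop (𝓝 (∫ x, w₀ x * h₀ x ∂μ)) := by
  have hh₀ : AEStronglyMeasurable h₀ μ := aestronglyMeasurable_of_tendsto_ae atTop hh hh_lim
  have hh₀_bound : ∀ᵐ x ∂μ, |h₀ x| ≤ C := by
    filter_upwards [hh_lim, ae_all_iff.2 hh_bound] with x hx hxC using le_of_tendsto' hx.abs hxC
  have hsub_bound : ∀ n, ∀ᵐ x ∂μ, |h n x - h₀ x| ≤ C + C := fun n => by
    filter_upwards [hh_bound n, hh₀_bound] with x h1 h2 using (abs_sub _ _).trans (add_le_add h1 h2)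
  have hint : ∀ n, Integrable (fun x => w n x * |h n x - h₀ x|) μ := fun n =>
    (hw_int n).mul_bdd ((hh n).sub hh₀).norm <| (hsub_bound n).mono fun x hx => by
      rwa [Real.norm_eq_abs, abs_abs]
  have hdiff : Tendsto (fun n => ∫ x, w n x * h n x ∂μ - ∫ x, w n x * h₀ x ∂μ) atTop (𝓝 0) := by
    refine squeeze_zero_norm (fun n => ?_) <| hw.tendsto_integral_mul_of_tendsto_zero hw_int hw₀
      hw_nonneg (fun n => ((hh n).sub hh₀).norm) (fun n x => abs_nonneg _) hsub_bound
      (by filter_upwards [hh_lim] with x hx using by simpa using (hx.sub_const (h₀ x)).abs)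
    rw [← integral_sub ((hw_int n).mul_bdd (hh n) (hh_bound n))
      ((hw_int n).mul_bdd hh₀ hh₀_bound)]
    refine norm_integral_le_of_norm_le (hint n) ?_
    filter_upwards [hw_nonneg n] with x hx
    rw [← mul_sub, norm_mul, Real.norm_eq_abs, abs_of_nonneg hx, Pi.sub_apply]
  simpa using (hw.tendsto_integral_mul_of_ae_bound hh₀ hh₀_bound).add hdiff

end TendstoWeaklyL1
end WeakL1

section BoundedContinuousTest

variable {X V : Type*} [MeasurableSpace X] {μ : Measure X} [NormedAddCommGroup V]

theorem integral_norm_indicator_sub_le {s : Set X} (hs : MeasurableSet s) {G F g : X → V}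
    (hG : IntegrableOn G s μ) (hF : Integrable F μ) (hg : Integrable g μ) :
    ∫ x, ‖s.indicator G x - F x‖ ∂μ ≤
      ∫ x in s, ‖G x - g x‖ ∂μ + ∫ x in s, ‖g x - F x‖ ∂μ + ∫ x in sᶜ, ‖F x‖ ∂μ := by
  have h1 : Integrable (s.indicator fun x => ‖G x - g x‖) μ :=
    (integrable_indicator_iff hs).2 (hG.sub hg.integrableOn).norm
  have h2 : Integrable (s.indicator fun x => ‖g x - F x‖) μ :=
    (integrable_indicator_iff hs).2 (hg.sub hF).norm.integrableOn
  have h3 : Integrable (sᶜ.indicator fun x => ‖F x‖) μ :=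
    (integrable_indicator_iff hs.compl).2 hF.norm.integrableOn
  calc ∫ x, ‖s.indicator G x - F x‖ ∂μ
      ≤ ∫ x, (s.indicator (fun x => ‖G x - g x‖) x + s.indicator (fun x => ‖g x - F x‖) x
          + sᶜ.indicator (fun x => ‖F x‖) x) ∂μ := by
        refine integral_mono_of_nonneg (ae_of_all _ fun _ => norm_nonneg _) ((h1.add h2).add h3)
          (ae_of_all _ fun x => ?_)
        by_cases hx : x ∈ s
        · simpa [hx] using norm_sub_le_norm_sub_add_norm_sub (G x) (g x) (F x)
        · simp [hx]
    _ = _ := by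
        rw [integral_add (by exact h1.add h2) h3, integral_add h1 h2, integral_indicator hs,
          integral_indicator hs, integral_indicator hs.compl]

variable [TopologicalSpace X] [NormalSpace X] [BorelSpace X] [μ.WeaklyRegular] [NormedSpace ℝ V]
  {A : ℕ → Set X} {A₀ : Set X}

theorem tendsto_setIntegral_of_forall_boundedContinuous
    (hA : ∀ φ : X →ᵇ ℝ, Tendsto (fun n => ∫ x in A n, φ x ∂μ) atTop (𝓝 (∫ x in A₀, φ x ∂μ)))
    {ψ : X → ℝ} (hψ : Integrable ψ μ) :
    Tendsto (fun n => ∫ x in A n, ψ x ∂μ) atTop (𝓝 (∫ x in A₀, ψ x ∂μ)) := by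
  refine Metric.tendsto_nhds.2 fun ε hε => ?_
  obtain ⟨φ, hψφ, hφ⟩ := hψ.exists_boundedContinuous_integral_sub_le (ε := ε / 3) (by positivity)
  have hclose : ∀ s, dist (∫ x in s, ψ x ∂μ) (∫ x in s, φ x ∂μ) ≤ ε / 3 := fun s =>
    calc dist (∫ x in s, ψ x ∂μ) (∫ x in s, φ x ∂μ) = ‖∫ x in s, (ψ x - φ x) ∂μ‖ := by
          rw [dist_eq_norm, integral_sub hψ.integrableOn hφ.integrableOn]
      _ ≤ ∫ x in s, ‖ψ x - φ x‖ ∂μ := norm_integral_le_integral_norm _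
      _ ≤ ∫ x, ‖ψ x - φ x‖ ∂μ :=
          setIntegral_le_integral (hψ.sub hφ).norm (ae_of_all _ fun _ => norm_nonneg _)
      _ ≤ ε / 3 := hψφ
  filter_upwards [Metric.tendsto_nhds.1 (hA φ) (ε / 3) (by positivity)] with n hn
  calc dist (∫ x in A n, ψ x ∂μ) (∫ x in A₀, ψ x ∂μ)
      ≤ dist (∫ x in A n, ψ x ∂μ) (∫ x in A n, φ x ∂μ)
        + dist (∫ x in A n, φ x ∂μ) (∫ x in A₀, φ x ∂μ)
        + dist (∫ x in A₀, φ x ∂μ) (∫ x in A₀, ψ x ∂μ) := dist_triangle4 _ _ _ _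
    _ < ε := by
      rw [dist_comm (∫ x in A₀, φ x ∂μ)]
      linarith [hclose (A n), hclose A₀]

theorem tendsto_lintegral_enorm_indicator_sub_of_forall_boundedContinuous
    (hAm : ∀ n, MeasurableSet (A n)) (hA₀m : MeasurableSet A₀)
    {G : ℕ → X → V} {G₀ : X → V} (hG : ∀ n, IntegrableOn (G n) (A n) μ) (hG₀ : IntegrableOn G₀ A₀ μ)
    (hA : ∀ φ : X →ᵇ ℝ, Tendsto (fun n => ∫ x in A n, φ x ∂μ) atTop (𝓝 (∫ x in A₀, φ x ∂μ)))
    (hAG : ∀ g : X →ᵇ V, Tendsto (fun n => ∫ x in A n, ‖G n x - g x‖ ∂μ) atTop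
      (𝓝 (∫ x in A₀, ‖G₀ x - g x‖ ∂μ))) :
    Tendsto (fun n => ∫⁻ x, ‖(A n).indicator (G n) x - A₀.indicator G₀ x‖ₑ ∂μ) atTop (𝓝 0) := by
  set F := A₀.indicator G₀
  have hF : Integrable F μ := (integrable_indicator_iff hA₀m).2 hG₀
  suffices Tendsto (fun n => ∫ x, ‖(A n).indicator (G n) x - F x‖ ∂μ) atTop (𝓝 0) by
    rw [← ENNReal.ofReal_zero]
    exact (ENNReal.tendsto_ofReal this).congr fun n => ofReal_integral_norm_eq_lintegral_enorm
      (((integrable_indicator_iff (hAm n)).2 (hG n)).sub hF)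
  refine tendsto_order.2 ⟨fun a ha => Eventually.of_forall fun n =>
    ha.trans_le (integral_nonneg fun _ => norm_nonneg _), fun ε hε => ?_⟩
  obtain ⟨g, hFg, hg⟩ := hF.exists_boundedContinuous_integral_sub_le (ε := ε / 3) (by positivity)
  have hlim : Tendsto (fun n => ∫ x in A n, ‖G n x - g x‖ ∂μ + ∫ x in A n, ‖g x - F x‖ ∂μ
      + ∫ x in (A n)ᶜ, ‖F x‖ ∂μ) atTop (𝓝 (∫ x in A₀, ‖G₀ x - g x‖ ∂μ
      + ∫ x in A₀, ‖g x - F x‖ ∂μ + ∫ x in A₀ᶜ, ‖F x‖ ∂μ)) := by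
    refine ((hAG g).add
      (tendsto_setIntegral_of_forall_boundedContinuous hA (hg.sub hF).norm)).add ?_
    simp only [setIntegral_compl (hAm _) hF.norm, setIntegral_compl hA₀m hF.norm]
    exact tendsto_const_nhds.sub (tendsto_setIntegral_of_forall_boundedContinuous hA hF.norm)
  have hsmall : ∫ x in A₀, ‖G₀ x - g x‖ ∂μ + ∫ x in A₀, ‖g x - F x‖ ∂μ
      + ∫ x in A₀ᶜ, ‖F x‖ ∂μ < ε := by
    have hA₀_le : ∫ x in A₀, ‖F x - g x‖ ∂μ ≤ ε / 3 :=
      (setIntegral_le_integral (hF.sub hg).norm (ae_of_all _ fun _ => norm_nonneg _)).trans hFg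
    have h1 : ∫ x in A₀, ‖G₀ x - g x‖ ∂μ = ∫ x in A₀, ‖F x - g x‖ ∂μ :=
      setIntegral_congr_fun hA₀m fun x hx => by simp only [F, indicator_of_mem hx]
    have h2 : ∫ x in A₀, ‖g x - F x‖ ∂μ = ∫ x in A₀, ‖F x - g x‖ ∂μ := by
      simp only [norm_sub_rev (g _)]
    have h3 : ∫ x in A₀ᶜ, ‖F x‖ ∂μ = 0 :=
      setIntegral_eq_zero_of_forall_eq_zero fun x hx => by simp [F, indicator_of_notMem hx]
    linarith
  filter_upwards [hlim.eventually (gt_mem_nhds hsmall)] with n hn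
  exact (integral_norm_indicator_sub_le (hAm n) (hG n) hF hg).trans_lt hn

end BoundedContinuousTest

namespace ApproxDiffTriple
variable {N : ℕ} {A D : Set (Euc N)} {u : Euc N → Euc N} {f : Euc N → Euc N →L[ℝ] Euc N}

theorem continuousOn (h : ApproxDiffTriple A D u f) : ContinuousOn u D :=
  fun x hx => (h.2.2.2 x hx).continuousWithinAt

theorem restrict_eq (h : ApproxDiffTriple A D u f) : volume.restrict D = volume.restrict A :=
  Measure.restrict_congr_set <| ae_eq_set.2 ⟨by rw [sdiff_eq_empty.2 h.2.1, measure_empty], h.2.2.1⟩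

theorem ae_mem (h : ApproxDiffTriple A D u f) : ∀ᵐ x ∂volume.restrict A, x ∈ D :=
  h.restrict_eq ▸ ae_restrict_mem h.1

theorem aestronglyMeasurable (h : ApproxDiffTriple A D u f) :
    AEStronglyMeasurable u (volume.restrict A) :=
  h.restrict_eq ▸ h.continuousOn.aestronglyMeasurable h.1

end ApproxDiffTriple

namespace AdmissibleDef

variable {N : ℕ} {Ω D E : Set (Euc N)} {y : Euc N → Euc N} {f : Euc N → Euc N →L[ℝ] Euc N}

theorem measurableSet_image (h : AdmissibleDef Ω D y f) (hE : MeasurableSet E) :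
    MeasurableSet (y '' (E ∩ D)) :=
  (hE.inter h.1.1).image_of_continuousOn_injOn (h.1.continuousOn.mono inter_subset_right)
    (h.2.1.mono inter_subset_right)

theorem integrableOn_image_invFunOn (h : AdmissibleDef Ω D y f) (hΩ : Bornology.IsBounded Ω)
    (hE : MeasurableSet E) : IntegrableOn (Function.invFunOn y D) (y '' (E ∩ D)) := by
  have hs : MeasurableSet (E ∩ D) := hE.inter h.1.1
  obtain ⟨R, hR⟩ := hΩ.exists_norm_le
  rw [integrableOn_image_iff_integrableOn_abs_det_fderiv_smul volume hs
    (fun x hx => (h.1.2.2.2 x hx.2).mono inter_subset_right) (h.2.1.mono inter_subset_right)]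
  refine IntegrableOn.congr_fun ?_ (fun x hx => by
    rw [h.2.1.leftInvOn_invFunOn hx.2]) hs
  exact (h.2.2.2.mono_set (inter_subset_right.trans h.1.2.1)).abs.smul_bdd R
    aestronglyMeasurable_id ((ae_restrict_iff' hs).2 (ae_of_all _ fun x hx => hR x (h.1.2.1 hx.2)))

theorem setIntegral_image_invFunOn (h : AdmissibleDef Ω D y f) (hE : MeasurableSet E)
    (Φ : Euc N × Euc N → ℝ) :
    ∫ ξ in y '' (E ∩ D), Φ (ξ, Function.invFunOn y D ξ) =
      ∫ x in Ω, (f x).det * E.indicator (fun x => Φ (y x, x)) x := by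
  have hs : MeasurableSet (E ∩ D) := hE.inter h.1.1
  rw [integral_image_eq_integral_abs_det_fderiv_smul volume hs
    (fun x hx => (h.1.2.2.2 x hx.2).mono inter_subset_right) (h.2.1.mono inter_subset_right),
    setIntegral_congr_fun hs (g := fun x => (f x).det * Φ (y x, x)) fun x hx => by
      rw [smul_eq_mul, abs_of_pos (h.2.2.1 x hx.2), h.2.1.leftInvOn_invFunOn hx.2],
    ← Measure.restrict_restrict hE, h.1.restrict_eq, ← integral_indicator hE]
  simp only [indicator_mul_right]

end AdmissibleDef

theorem tendsto_setIntegral_image_invFunOn {N : ℕ} {Ω : Set (Euc N)} (hΩ : Bornology.IsBounded Ω)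
    {y : ℕ → Euc N → Euc N} {D : ℕ → Set (Euc N)} {f : ℕ → Euc N → Euc N →L[ℝ] Euc N}
    (hadm : ∀ n, AdmissibleDef Ω (D n) (y n) (f n))
    {y₀ : Euc N → Euc N} {D₀ : Set (Euc N)} {f₀ : Euc N → Euc N →L[ℝ] Euc N}
    (hadm₀ : AdmissibleDef Ω D₀ y₀ f₀)
    (hae : ∀ᵐ x ∂(volume.restrict Ω), Tendsto (fun n => y n x) atTop (𝓝 (y₀ x)))
    (hdet : WeakL1ConvOn Ω (fun n x => (f n x).det) (fun x => (f₀ x).det))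
    {E : Set (Euc N)} (hE : MeasurableSet E) (hEΩ : E ⊆ Ω)
    (Φ : Euc N × Euc N → ℝ) (hΦ : Continuous Φ) {C : ℝ} (hΦC : ∀ ξ, ∀ x ∈ Ω, |Φ (ξ, x)| ≤ C) :
    Tendsto (fun n => ∫ ξ in y n '' (E ∩ D n), Φ (ξ, Function.invFunOn (y n) (D n) ξ)) atTop
      (𝓝 (∫ ξ in y₀ '' (E ∩ D₀), Φ (ξ, Function.invFunOn y₀ D₀ ξ))) := by
  have : IsFiniteMeasure (volume.restrict Ω) := isFiniteMeasure_restrict.2 hΩ.measure_lt_top.ne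
  simp only [(hadm _).setIntegral_image_invFunOn hE, hadm₀.setIntegral_image_invFunOn hE]
  refine TendstoWeaklyL1.tendsto_integral_mul_of_ae_tendsto hdet (fun n => (hadm n).2.2.2)
    hadm₀.2.2.2 (fun n => (hadm n).1.ae_mem.mono fun x hx => ((hadm n).2.2.1 x hx).le)
    (C := max C 0)
    (fun n => (hΦ.comp_aestronglyMeasurable
      ((hadm n).1.aestronglyMeasurable.prodMk aestronglyMeasurable_id)).indicator hE)
    (fun n => ae_of_all _ fun x => ?_) ?_
  · by_cases hx : x ∈ E
    · rw [indicator_of_mem hx]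
      exact le_max_of_le_left (hΦC (y n x) x (hEΩ hx))
    · simp [hx]
  · filter_upwards [hae] with x hx
    by_cases hxE : x ∈ E
    · simp only [indicator_of_mem hxE]
      exact (hΦ.tendsto _).comp (hx.prodMk_nhds tendsto_const_nhds)
    · simp [hxE]

theorem convergence_of_inverse_deformations_general {N : ℕ}
    (Ω : Set (Euc N)) (hΩb : Bornology.IsBounded Ω)
    (y : ℕ → Euc N → Euc N) (D : ℕ → Set (Euc N)) (f : ℕ → Euc N → Euc N →L[ℝ] Euc N)
    (hadm : ∀ n, AdmissibleDef Ω (D n) (y n) (f n))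
    (y₀ : Euc N → Euc N) (D₀ : Set (Euc N)) (f₀ : Euc N → Euc N →L[ℝ] Euc N)
    (hadm₀ : AdmissibleDef Ω D₀ y₀ f₀)
    (hae : ∀ᵐ x ∂(volume.restrict Ω), Tendsto (fun n => y n x) atTop (𝓝 (y₀ x)))
    (hdet : WeakL1ConvOn Ω (fun n x => (f n x).det) (fun x => (f₀ x).det))
    (E : Set (Euc N)) (hE : MeasurableSet E) (hEΩ : E ⊆ Ω) :
    Tendsto
      (fun n => ∫⁻ ξ,
        (‖(y n '' (E ∩ D n)).indicator (Function.invFunOn (y n) (D n)) ξ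
            - (y₀ '' (E ∩ D₀)).indicator (Function.invFunOn y₀ D₀) ξ‖₊ : ℝ≥0∞))
      atTop (𝓝 0) := by
  obtain ⟨R, hR⟩ := hΩb.exists_norm_le
  have hconv := tendsto_setIntegral_image_invFunOn hΩb hadm hadm₀ hae hdet hE hEΩ
  exact tendsto_lintegral_enorm_indicator_sub_of_forall_boundedContinuous
    (fun n => (hadm n).measurableSet_image hE) (hadm₀.measurableSet_image hE)
    (fun n => (hadm n).integrableOn_image_invFunOn hΩb hE)
    (hadm₀.integrableOn_image_invFunOn hΩb hE)
    (fun φ => hconv (fun p => φ p.1) (by fun_prop) fun ξ _ _ => φ.norm_coe_le_norm ξ)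
    (fun g => hconv (fun p => ‖p.2 - g p.1‖) (by fun_prop) (C := R + ‖g‖) fun ξ x hx => by
      rw [abs_norm]
      exact (norm_sub_le _ _).trans (add_le_add (hR x hx) (g.norm_coe_le_norm ξ)))

/-- Convergence of inverse deformations:
`χ_{im_G(y_n,E)} y_n⁻¹ → χ_{im_G(y,E)} y⁻¹` in `L¹(ℝ^N; ℝ^N)`. -/
theorem convergence_of_inverse_deformations {N : ℕ} (hN : 2 ≤ N)
    (Ω : Set (Euc N)) (hΩo : IsOpen Ω) (hΩb : Bornology.IsBounded Ω)
    (y : ℕ → Euc N → Euc N) (D : ℕ → Set (Euc N)) (f : ℕ → Euc N → Euc N →L[ℝ] Euc N)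
    (hadm : ∀ n, AdmissibleDef Ω (D n) (y n) (f n))
    (y₀ : Euc N → Euc N) (D₀ : Set (Euc N)) (f₀ : Euc N → Euc N →L[ℝ] Euc N)
    (hadm₀ : AdmissibleDef Ω D₀ y₀ f₀)
    (hae : ∀ᵐ x ∂(volume.restrict Ω), Tendsto (fun n => y n x) atTop (𝓝 (y₀ x)))
    (hdet : WeakL1ConvOn Ω (fun n x => (f n x).det) (fun x => (f₀ x).det))
    (E : Set (Euc N)) (hE : MeasurableSet E) (hEΩ : E ⊆ Ω) :
    Tendsto
      (fun n => ∫⁻ ξ,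
        (‖(y n '' (E ∩ D n)).indicator (Function.invFunOn (y n) (D n)) ξ
            - (y₀ '' (E ∩ D₀)).indicator (Function.invFunOn y₀ D₀) ξ‖₊ : ℝ≥0∞))
      atTop (𝓝 0) :=
  convergence_of_inverse_deformations_general Ω hΩb y D f hadm y₀ D₀ f₀ hadm₀ hae hdet E hE hEΩ
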